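/- arXiv:2005.04514 — 4 statements merged into one kernel-verified Lean document; each statement's English description precedes it below -/
import Mathlib

section
/- Let c ∈ (0, 1] and let k₀, N be positive integers with N ≥ ⌈3k₀/2⌉. Then there is a constant C (depending only on c) such that the sum over k from 1 to N, k ≠ k₀, of k^{c−1}·|k₀ − k| / (k₀^c − k^c)² is at most C · N^{1−c} · log(N+1). -/
/-!
Concavity of `t ↦ t ^ c` gives `|k₀ ^ c - k ^ c| ≥ c m ^ (c - 1) |k₀ - k|` with `m = max k k₀`, so
the `k`-th term is at most `(m / k) ^ (1 - c) m ^ (1 - c) / (c ^ 2 |k₀ - k|)`. Since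
`(m / k) ^ (1 - c) ≤ m / k ≤ 1 + |k₀ - k| / k`, this is at most
`N ^ (1 - c) / c ^ 2 * (1 / k + 1 / |k₀ - k|)`, and both sums are harmonic sums, `O(log N)`.
-/

open Finset Real

theorem mul_rpow_sub_one_mul_sub_le_rpow_sub_rpow {c x y : ℝ} (hc0 : 0 < c) (hc1 : c ≤ 1)
    (hx : 0 ≤ x) (hxy : x ≤ y) : c * y ^ (c - 1) * (y - x) ≤ y ^ c - x ^ c := by
  rcases (hx.trans hxy).eq_or_lt with rfl | hy
  · simp [le_antisymm hxy hx]
  have ht : 0 ≤ x / y := div_nonneg hx hy.le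
  -- Bernoulli's inequality at `x / y`, then rescale by `y ^ c`
  have bernoulli : (x / y) ^ c ≤ 1 + c * (x / y - 1) := by
    simpa using rpow_one_add_le_one_add_mul_self (s := x / y - 1) (by linarith) hc0.le hc1
  have hxc : x ^ c = (x / y) ^ c * y ^ c := by
    rw [← mul_rpow ht hy.le, div_mul_cancel₀ _ hy.ne']
  have hyc : y ^ c = y ^ (c - 1) * y := by
    rw [← rpow_add_one hy.ne', sub_add_cancel]
  calc c * y ^ (c - 1) * (y - x) = c * (1 - x / y) * y ^ c := by
        rw [hyc]; field_simp
    _ ≤ (1 - (x / y) ^ c) * y ^ c := by gcongr; linarith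
    _ = y ^ c - x ^ c := by rw [hxc]; ring

theorem rpow_sub_one_mul_abs_sub_div_sq_le {c x y M : ℝ} (hc0 : 0 < c) (hc1 : c ≤ 1)
    (hx : 0 < x) (hy : 0 ≤ y) (hxM : x ≤ M) (hyM : y ≤ M) (hxy : x ≠ y) :
    x ^ (c - 1) * |y - x| / (y ^ c - x ^ c) ^ 2 ≤ M ^ (1 - c) / c ^ 2 * (x⁻¹ + |y - x|⁻¹) := by
  set m := max x y
  set d := |y - x|
  have hm : 0 < m := lt_max_of_lt_left hx
  have hd : 0 < d := abs_pos.mpr (sub_ne_zero.mpr hxy.symm)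
  have hmd : m ≤ x + d := max_le (by linarith) (by linarith [le_abs_self (y - x)])
  have hgap : c * m ^ (c - 1) * d ≤ |y ^ c - x ^ c| := by
    rcases le_total x y with h | h
    · simpa [m, d, h, abs_of_nonneg (sub_nonneg.mpr h),
        abs_of_nonneg (sub_nonneg.mpr (rpow_le_rpow hx.le h hc0.le))]
        using mul_rpow_sub_one_mul_sub_le_rpow_sub_rpow hc0 hc1 hx.le h
    · simpa [m, d, h, abs_sub_comm, abs_of_nonneg (sub_nonneg.mpr h),
        abs_of_nonneg (sub_nonneg.mpr (rpow_le_rpow hy h hc0.le))]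
        using mul_rpow_sub_one_mul_sub_le_rpow_sub_rpow hc0 hc1 hy h
  have hratio : (m / x) ^ (1 - c) ≤ m / x :=
    rpow_le_self_of_one_le ((one_le_div hx).mpr (le_max_left x y)) (by linarith)
  have hmM : m ^ (1 - c) ≤ M ^ (1 - c) := rpow_le_rpow hm.le (max_le hxM hyM) (by linarith)
  calc x ^ (c - 1) * d / (y ^ c - x ^ c) ^ 2
      ≤ x ^ (c - 1) * d / (c * m ^ (c - 1) * d) ^ 2 := by
        rw [← sq_abs (y ^ c - x ^ c)]
        gcongr
    _ = (m / x) ^ (1 - c) * m ^ (1 - c) / (c ^ 2 * d) := by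
        rw [div_rpow hm.le hx.le, show c - 1 = -(1 - c) by ring, rpow_neg hx.le, rpow_neg hm.le]
        field_simp
    _ ≤ m / x * M ^ (1 - c) / (c ^ 2 * d) := by gcongr
    _ ≤ (x + d) / x * M ^ (1 - c) / (c ^ 2 * d) := by
        gcongr
        exact rpow_nonneg (hx.le.trans hxM) _
    _ = M ^ (1 - c) / c ^ 2 * (x⁻¹ + d⁻¹) := by field_simp; ring

theorem sum_inv_le_harmonic {s : Finset ℕ} {f : ℕ → ℕ} {N : ℕ} (hf : Set.InjOn f s)
    (hmaps : ∀ k ∈ s, f k ∈ Icc 1 N) : ∑ k ∈ s, ((f k : ℝ))⁻¹ ≤ harmonic N := by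
  rw [← sum_image (g := f) (f := fun j : ℕ => ((j : ℝ))⁻¹) hf, harmonic_eq_sum_Icc]
  push_cast
  exact sum_le_sum_of_subset_of_nonneg (by simpa [subset_iff] using hmaps)
    fun _ _ _ => by positivity

theorem sum_inv_abs_sub_le_two_mul_harmonic {k₀ N : ℕ} (hk₀ : k₀ ≤ N) :
    ∑ k ∈ (Icc 1 N).filter (· ≠ k₀), |(k₀ : ℝ) - k|⁻¹ ≤ 2 * harmonic N := by
  rw [← sum_filter_add_sum_filter_not _ (· < k₀), two_mul]
  gcongr
  · calc _ = ∑ k ∈ ((Icc 1 N).filter (· ≠ k₀)).filter (· < k₀), (((k₀ - k : ℕ) : ℝ))⁻¹ := by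
          refine sum_congr rfl fun k hk => ?_
          simp only [mem_filter] at hk
          rw [Nat.cast_sub hk.2.le, abs_of_pos (sub_pos.mpr (by exact_mod_cast hk.2))]
      _ ≤ harmonic N := sum_inv_le_harmonic
          (fun a ha b hb h => by simp only [coe_filter, Set.mem_ofPred_eq] at ha hb; omega)
          (fun k hk => by simp only [mem_filter, mem_Icc] at hk ⊢; omega)
  · calc _ = ∑ k ∈ ((Icc 1 N).filter (· ≠ k₀)).filter (¬ · < k₀), (((k - k₀ : ℕ) : ℝ))⁻¹ := by
          refine sum_congr rfl fun k hk => ?_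
          simp only [mem_filter, not_lt] at hk
          rw [Nat.cast_sub hk.2, abs_sub_comm,
            abs_of_nonneg (sub_nonneg.mpr (by exact_mod_cast hk.2))]
      _ ≤ harmonic N := sum_inv_le_harmonic
          (fun a ha b hb h => by simp only [coe_filter, Set.mem_ofPred_eq] at ha hb; omega)
          (fun k hk => by simp only [mem_filter, mem_Icc] at hk ⊢; omega)

theorem harmonic_le_two_mul_log_add_one (N : ℕ) : (harmonic N : ℝ) ≤ 2 * log (N + 1) := by
  rcases N.eq_zero_or_pos with rfl | hN
  · simp
  have hN' : (1 : ℝ) ≤ N := by exact_mod_cast hN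
  -- `1 + log N = log (e N)` and `e N ≤ 3 N ≤ (N + 1) ^ 2`
  calc (harmonic N : ℝ) ≤ 1 + log N := harmonic_le_one_add_log N
    _ = log (exp 1 * N) := by rw [log_mul (exp_pos 1).ne' (by positivity), log_exp]
    _ ≤ log ((N + 1) ^ 2) := by
        gcongr
        nlinarith [exp_one_lt_d9]
    _ = 2 * log (N + 1) := by rw [log_pow]; norm_num

open Finset in
theorem sum_bound_full (c : ℝ) (hc0 : 0 < c) (hc1 : c ≤ 1) :
    ∃ C : ℝ, ∀ k₀ N : ℕ, 0 < k₀ → 3 * k₀ ≤ 2 * N →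
      ∑ k ∈ (Finset.Icc 1 N).filter (· ≠ k₀),
          (k : ℝ) ^ (c - 1) * |(k₀ : ℝ) - (k : ℝ)| / ((k₀ : ℝ) ^ c - (k : ℝ) ^ c) ^ 2
        ≤ C * (N : ℝ) ^ (1 - c) * Real.log (N + 1) := by
  refine ⟨6 / c ^ 2, fun k₀ N _ hN => ?_⟩
  have hk₀N : k₀ ≤ N := by omega
  have hterm : ∀ k ∈ (Icc 1 N).filter (· ≠ k₀),
      (k : ℝ) ^ (c - 1) * |(k₀ : ℝ) - k| / ((k₀ : ℝ) ^ c - (k : ℝ) ^ c) ^ 2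
        ≤ (N : ℝ) ^ (1 - c) / c ^ 2 * ((k : ℝ)⁻¹ + |(k₀ : ℝ) - k|⁻¹) := by
    intro k hk
    simp only [mem_filter, mem_Icc] at hk
    exact rpow_sub_one_mul_abs_sub_div_sq_le hc0 hc1 (by exact_mod_cast hk.1.1) (by positivity)
      (by exact_mod_cast hk.1.2) (by exact_mod_cast hk₀N) (by exact_mod_cast hk.2)
  calc _ ≤ ∑ k ∈ (Icc 1 N).filter (· ≠ k₀),
          (N : ℝ) ^ (1 - c) / c ^ 2 * ((k : ℝ)⁻¹ + |(k₀ : ℝ) - k|⁻¹) := sum_le_sum hterm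
    _ = (N : ℝ) ^ (1 - c) / c ^ 2 * (∑ k ∈ (Icc 1 N).filter (· ≠ k₀), (k : ℝ)⁻¹
          + ∑ k ∈ (Icc 1 N).filter (· ≠ k₀), |(k₀ : ℝ) - k|⁻¹) := by
        rw [← mul_sum, sum_add_distrib]
    _ ≤ (N : ℝ) ^ (1 - c) / c ^ 2 * (harmonic N + 2 * harmonic N) := by
        gcongr
        · exact sum_inv_le_harmonic (f := id) (Set.injOn_id _) fun k hk => (mem_filter.mp hk).1
        · exact sum_inv_abs_sub_le_two_mul_harmonic hk₀N
    _ ≤ (N : ℝ) ^ (1 - c) / c ^ 2 * (3 * (2 * log (N + 1))) := by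
        gcongr
        linarith [harmonic_le_two_mul_log_add_one N]
    _ = 6 / c ^ 2 * (N : ℝ) ^ (1 - c) * log (N + 1) := by ring
end

section
/- Let c ∈ (0, 1] and k₀ ≥ 2 an integer. Then the sum over integers k with 1 ≤ k ≤ ⌊k₀/2⌋ of k^{c−1}(k₀ − k)/(k₀^c − k^c)² is bounded by C·k₀^{1−c} for a constant C depending only on c. -/
/-!
Since `k ≤ k₀ / 2`, the denominator is at least `(k₀ ^ c (1 - 2 ^ (-c))) ^ 2` and the factor
`k₀ - k` at most `k₀`, so the sum is `O(k₀ ^ (1 - 2c))` times `∑_{k ≤ k₀/2} k ^ (c - 1)`.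
By concavity of `x ↦ x ^ c` (Bernoulli), `c k ^ (c - 1) ≤ k ^ c - (k - 1) ^ c`, so the latter sum
telescopes to at most `k₀ ^ c / c`.
-/

open Finset Real

lemma mul_rpow_sub_one_le_rpow_sub_rpow_sub_one {c x : ℝ} (hc0 : 0 ≤ c) (hc1 : c ≤ 1)
    (hx : 1 ≤ x) : c * x ^ (c - 1) ≤ x ^ c - (x - 1) ^ c := by
  have hx0 : 0 < x := by linarith
  have hinv : -1 ≤ -x⁻¹ := neg_le_neg (inv_le_one_of_one_le₀ hx)
  have hbern : (1 + -x⁻¹) ^ c ≤ 1 + c * -x⁻¹ := rpow_one_add_le_one_add_mul_self hinv hc0 hc1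
  have hsplit : (x - 1) ^ c = x ^ c * (1 + -x⁻¹) ^ c := by
    rw [← mul_rpow hx0.le (by linarith), mul_add, mul_neg, mul_inv_cancel₀ hx0.ne', mul_one,
      sub_eq_add_neg]
  calc c * x ^ (c - 1) = x ^ c - x ^ c * (1 + c * -x⁻¹) := by
        rw [rpow_sub_one hx0.ne']
        ring
    _ ≤ x ^ c - (x - 1) ^ c := by
        rw [hsplit]
        gcongr

lemma sum_Icc_rpow_sub_rpow_sub_one {c : ℝ} (hc : c ≠ 0) (n : ℕ) :
    ∑ k ∈ Icc 1 n, ((k : ℝ) ^ c - ((k : ℝ) - 1) ^ c) = (n : ℝ) ^ c := by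
  induction n with
  | zero => simp [zero_rpow hc]
  | succ n ih =>
    rw [sum_Icc_succ_top (by omega), ih, Nat.cast_succ, add_sub_cancel_right, add_sub_cancel]

lemma sum_Icc_rpow_sub_one_le {c : ℝ} (hc0 : 0 < c) (hc1 : c ≤ 1) (n : ℕ) :
    ∑ k ∈ Icc 1 n, (k : ℝ) ^ (c - 1) ≤ (n : ℝ) ^ c / c := by
  rw [le_div_iff₀ hc0, ← sum_Icc_rpow_sub_rpow_sub_one hc0.ne' n, sum_mul]
  refine sum_le_sum fun k hk => ?_
  rw [mul_comm]
  exact mul_rpow_sub_one_le_rpow_sub_rpow_sub_one hc0.le hc1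
    (by exact_mod_cast (mem_Icc.mp hk).1)

lemma rpow_mul_one_sub_two_rpow_neg_le {c x y : ℝ} (hc : 0 ≤ c) (hx : 0 ≤ x) (hxy : 2 * x ≤ y) :
    y ^ c * (1 - 2 ^ (-c)) ≤ y ^ c - x ^ c := by
  have hhalf : x ^ c ≤ y ^ c * 2 ^ (-c) := by
    rw [rpow_neg zero_le_two, ← div_eq_mul_inv, ← div_rpow (by linarith) zero_le_two]
    exact rpow_le_rpow hx (by linarith) hc
  linarith

lemma one_sub_two_rpow_neg_pos {c : ℝ} (hc : 0 < c) : 0 < 1 - (2 : ℝ) ^ (-c) := by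
  have : (2 : ℝ) ^ (-c) < 1 := rpow_lt_one_of_one_lt_of_neg one_lt_two (neg_neg_of_pos hc)
  linarith

open Finset in
theorem sum_S1_bound (c : ℝ) (hc0 : 0 < c) (hc1 : c ≤ 1) :
    ∃ C : ℝ, ∀ k₀ : ℕ, 2 ≤ k₀ →
      ∑ k ∈ Finset.Icc 1 (k₀ / 2),
          (k : ℝ) ^ (c - 1) * ((k₀ : ℝ) - (k : ℝ)) / ((k₀ : ℝ) ^ c - (k : ℝ) ^ c) ^ 2
        ≤ C * (k₀ : ℝ) ^ (1 - c) := by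
  set ε : ℝ := 1 - 2 ^ (-c)
  have hε : 0 < ε := one_sub_two_rpow_neg_pos hc0
  refine ⟨1 / (c * ε ^ 2), fun k₀ hk₀ => ?_⟩
  have hk₀pos : (0 : ℝ) < k₀ := by positivity
  have hterm : ∀ k ∈ Icc 1 (k₀ / 2),
      (k : ℝ) ^ (c - 1) * (k₀ - k) / ((k₀ : ℝ) ^ c - (k : ℝ) ^ c) ^ 2
        ≤ k₀ / ((k₀ : ℝ) ^ c * ε) ^ 2 * (k : ℝ) ^ (c - 1) := by
    intro k hk
    have hk2 : 2 * (k : ℝ) ≤ k₀ := by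
      have := (mem_Icc.mp hk).2
      exact_mod_cast (by omega : 2 * k ≤ k₀)
    rw [div_mul_eq_mul_div, mul_comm (k₀ : ℝ)]
    gcongr
    · linarith [(k.cast_nonneg : (0 : ℝ) ≤ k)]
    · exact rpow_mul_one_sub_two_rpow_neg_le hc0.le k.cast_nonneg hk2
  calc _ ≤ ∑ k ∈ Icc 1 (k₀ / 2), k₀ / ((k₀ : ℝ) ^ c * ε) ^ 2 * (k : ℝ) ^ (c - 1) :=
        sum_le_sum hterm
    _ ≤ k₀ / ((k₀ : ℝ) ^ c * ε) ^ 2 * ((k₀ : ℝ) ^ c / c) := by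
        rw [← mul_sum]
        gcongr
        refine (sum_Icc_rpow_sub_one_le hc0 hc1 _).trans ?_
        gcongr
        exact_mod_cast Nat.div_le_self k₀ 2
    _ = 1 / (c * ε ^ 2) * (k₀ : ℝ) ^ (1 - c) := by
        rw [rpow_sub hk₀pos, rpow_one]
        field_simp
end

section
/- Let c = 1/2. There is a constant C such that for every integer k ≥ 2 and every integer N ≥ 2, the sum over j from 2 to N of 1/(j² · (√k − √j)²), restricted to j ≠ k, is at most C/k. -/
/-! Multiplying by the conjugate gives `(√k - √j)² = (k - j)² / (√k + √j)²`, and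
`(√k + √j)² ≤ 2 (k + j)`, so `k` times the `j`-th term is at most `8 / j² + 8 / (k - j)²`.
Summed over `j`, both pieces are bounded by the convergent series `∑ 1 / n²` (over `ℕ`
and over `ℤ` respectively), independently of `k` and `N`. -/

open Finset

theorem div_sq_mul_sqrt_sub_sqrt_sq_le {x y : ℝ} (hx : 0 ≤ x) (hy : 0 < y) (hxy : x ≠ y) :
    x / (y ^ 2 * (√x - √y) ^ 2) ≤ 8 / y ^ 2 + 8 / (x - y) ^ 2 := by
  have hsx := Real.sq_sqrt hx
  have hsy := Real.sq_sqrt hy.le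
  have hsum : 0 < √x + √y := add_pos_of_nonneg_of_pos (Real.sqrt_nonneg x) (Real.sqrt_pos.2 hy)
  have hconj : (√x - √y) ^ 2 * (√x + √y) ^ 2 = (x - y) ^ 2 := by
    rw [← mul_pow]
    congr 1
    linear_combination hsx - hsy
  calc x / (y ^ 2 * (√x - √y) ^ 2)
      = x * (√x + √y) ^ 2 / (y ^ 2 * (x - y) ^ 2) := by
        rw [← hconj, ← mul_assoc, mul_div_mul_right _ _ (pow_pos hsum 2).ne']
    _ ≤ x * (2 * (x + y)) / (y ^ 2 * (x - y) ^ 2) := by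
        gcongr
        nlinarith [sq_nonneg (√x - √y)]
    _ ≤ (8 * (x - y) ^ 2 + 8 * y ^ 2) / (y ^ 2 * (x - y) ^ 2) := by
        gcongr
        nlinarith [sq_nonneg (2 * x - 3 * y)]
    _ = 8 / y ^ 2 + 8 / (x - y) ^ 2 := by
        field_simp

theorem sum_one_div_natCast_sub_sq_le_tsum (k : ℕ) (S : Finset ℕ) :
    ∑ j ∈ S, 1 / ((k : ℝ) - j) ^ 2 ≤ ∑' d : ℤ, 1 / (d : ℝ) ^ 2 := by
  set f : ℤ → ℝ := fun d ↦ 1 / (d : ℝ) ^ 2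
  have hf : Summable f := Real.summable_one_div_int_pow.2 one_lt_two
  have hinj : Function.Injective fun j : ℕ ↦ (k : ℤ) - j := fun a b h ↦ by simpa using h
  calc ∑ j ∈ S, 1 / ((k : ℝ) - j) ^ 2 = ∑ j ∈ S, f ((k : ℤ) - j) := by simp [f]
    _ ≤ ∑' j : ℕ, f ((k : ℤ) - j) :=
        (hf.comp_injective hinj).sum_le_tsum S fun _ _ ↦ by positivity
    _ ≤ ∑' d : ℤ, f d := tsum_comp_le_tsum_of_inj hf (fun _ ↦ by positivity) hinj

open Finset in
theorem sum_sqrt_bound :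
    ∃ C : ℝ, ∀ k N : ℕ, 2 ≤ k → 2 ≤ N →
      ∑ j ∈ (Finset.Icc 2 N).filter (· ≠ k),
          1 / ((j : ℝ) ^ 2 * (Real.sqrt k - Real.sqrt j) ^ 2)
        ≤ C / (k : ℝ) := by
  refine ⟨8 * ∑' n : ℕ, 1 / (n : ℝ) ^ 2 + 8 * ∑' d : ℤ, 1 / (d : ℝ) ^ 2, fun k N hk _ ↦ ?_⟩
  set S := (Finset.Icc 2 N).filter (· ≠ k)
  rw [le_div_iff₀ (by positivity), sum_mul]
  calc ∑ j ∈ S, 1 / ((j : ℝ) ^ 2 * (√k - √j) ^ 2) * k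
      = ∑ j ∈ S, (k : ℝ) / ((j : ℝ) ^ 2 * (√k - √j) ^ 2) := by
        simp only [one_div_mul_eq_div]
    _ ≤ ∑ j ∈ S, (8 / (j : ℝ) ^ 2 + 8 / ((k : ℝ) - j) ^ 2) := by
        refine sum_le_sum fun j hj ↦ ?_
        simp only [S, mem_filter, mem_Icc] at hj
        exact div_sq_mul_sqrt_sub_sqrt_sq_le k.cast_nonneg (Nat.cast_pos.2 (by omega))
          (by exact_mod_cast hj.2.symm)
    _ = 8 * ∑ j ∈ S, 1 / (j : ℝ) ^ 2 + 8 * ∑ j ∈ S, 1 / ((k : ℝ) - j) ^ 2 := by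
        simp only [sum_add_distrib, mul_sum, mul_one_div]
    _ ≤ 8 * ∑' n : ℕ, 1 / (n : ℝ) ^ 2 + 8 * ∑' d : ℤ, 1 / (d : ℝ) ^ 2 := by
        gcongr
        · exact (Real.summable_one_div_nat_pow.2 one_lt_two).sum_le_tsum S
            fun _ _ ↦ by positivity
        · exact sum_one_div_natCast_sub_sq_le_tsum k S
end

section
/- Let X have the standard Cauchy distribution. Let c ∈ [1/2, 1], let k₀, k be positive integers with |k − k₀| ≥ 2, and let L ≥ 1. Then P(L·k₀^{1−c}·|(k−1)^c − k₀^c| ≤ |X| < L·k₀^{1−c}·|k^c − k₀^c|) ≤ C·(k₀·k)^{c−1} / ((k^c − k₀^c)²·L) for a constant C depending only on c. -/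
/-!
On `{|x| ≥ a}` the Cauchy density is at most `1 / (π a²)`, so the annulus `a ≤ |x| < b` has
probability at most `2 (b - a) / (π a²)`. For `k ≤ k₀` the annulus of the theorem is empty. For
`k ≥ k₀ + 2`, the tangent-line bounds for the concave map `t ↦ t ^ c` give
`k^c - (k-1)^c ≤ 2 k^(c-1)` and `k^c - (k-1)^c ≤ (k-1)^c - k₀^c`; the latter yields
`(k^c - k₀^c)² ≤ 4 ((k-1)^c - k₀^c)²`, and with `k₀^(1-c) (k₀ k)^(c-1) = k^(c-1)` the bound holds
with `C = 16 / π`.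
-/

open MeasureTheory

/-- The standard Cauchy distribution on `ℝ`, with density `1/(π(1+x²))`. -/
noncomputable def stdCauchy : Measure ℝ :=
  volume.withDensity (fun x => ENNReal.ofReal (1 / (Real.pi * (1 + x ^ 2))))

open Real Set

theorem rpow_le_rpow_add_mul_sub {x y c : ℝ} (hx : 0 ≤ x) (hy : 0 < y) (hc0 : 0 ≤ c)
    (hc1 : c ≤ 1) : x ^ c ≤ y ^ c + c * y ^ (c - 1) * (x - y) := by
  have hs : -1 ≤ x / y - 1 := by linarith [div_nonneg hx hy.le]
  have key := rpow_one_add_le_one_add_mul_self hs hc0 hc1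
  rw [add_sub_cancel, div_rpow hx hy.le, div_le_iff₀ (rpow_pos_of_pos hy c)] at key
  calc x ^ c ≤ (1 + c * (x / y - 1)) * y ^ c := key
    _ = y ^ c + c * y ^ (c - 1) * (x - y) := by
      rw [rpow_sub_one hy.ne']; field_simp

theorem sub_one_rpow_le_two_mul_rpow {x c : ℝ} (hx : 2 ≤ x) (hc0 : 0 ≤ c) (hc1 : c ≤ 1) :
    (x - 1) ^ (c - 1) ≤ 2 * x ^ (c - 1) := by
  have half_le : (1 / 2 : ℝ) ≤ 2 ^ (c - 1) := by
    simpa [rpow_neg_one] using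
      rpow_le_rpow_of_exponent_le one_le_two (by linarith : (-1 : ℝ) ≤ c - 1)
  calc (x - 1) ^ (c - 1) ≤ (x / 2) ^ (c - 1) :=
        rpow_le_rpow_of_nonpos (by positivity) (by linarith) (by linarith)
    _ = x ^ (c - 1) / 2 ^ (c - 1) := div_rpow (by positivity) zero_le_two _
    _ ≤ 2 * x ^ (c - 1) := by
      rw [div_le_iff₀ (by positivity)]
      nlinarith [rpow_pos_of_pos (by linarith : (0 : ℝ) < x) (c - 1)]

theorem rpow_sub_sub_one_rpow_le {x c : ℝ} (hx : 2 ≤ x) (hc0 : 0 ≤ c) (hc1 : c ≤ 1) :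
    x ^ c - (x - 1) ^ c ≤ 2 * x ^ (c - 1) := by
  have tangent :=
    rpow_le_rpow_add_mul_sub (x := x) (y := x - 1) (by linarith) (by linarith) hc0 hc1
  have := sub_one_rpow_le_two_mul_rpow hx hc0 hc1
  have : 0 ≤ (x - 1) ^ (c - 1) := rpow_nonneg (by linarith) _
  nlinarith

theorem rpow_sub_sub_one_rpow_le_sub_one_rpow_sub {x y c : ℝ} (hy : 0 ≤ y) (hxy : y + 2 ≤ x)
    (hc0 : 0 ≤ c) (hc1 : c ≤ 1) : x ^ c - (x - 1) ^ c ≤ (x - 1) ^ c - y ^ c := by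
  have tangent_x :=
    rpow_le_rpow_add_mul_sub (x := x) (y := x - 1) (by linarith) (by linarith) hc0 hc1
  have tangent_y := rpow_le_rpow_add_mul_sub hy (by linarith : 0 < x - 1) hc0 hc1
  have : 0 ≤ c * (x - 1) ^ (c - 1) := mul_nonneg hc0 (rpow_nonneg (by linarith) _)
  nlinarith

theorem two_mul_sub_div_le {L s q u v w : ℝ} (hL : 0 < L) (hs : 0 < s) (huw : u < w)
    (hwv : w ≤ v) (hvw : v - w ≤ w - u) (hvwq : v - w ≤ 2 * (s * q)) :
    2 * (L * s * (v - u) - L * s * (w - u)) / (π * (L * s * (w - u)) ^ 2)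
      ≤ 16 / π * q / ((v - u) ^ 2 * L) := by
  have hvu : 0 < v - u := by linarith
  have hsq : (v - u) ^ 2 ≤ 4 * (w - u) ^ 2 := by nlinarith
  have key : (v - w) * (v - u) ^ 2 ≤ 2 * (s * q) * (4 * (w - u) ^ 2) :=
    mul_le_mul hvwq hsq (sq_nonneg _) (by linarith)
  rw [div_le_div_iff₀ (by positivity) (by positivity)]
  calc 2 * (L * s * (v - u) - L * s * (w - u)) * ((v - u) ^ 2 * L)
      = 2 * L ^ 2 * s * ((v - w) * (v - u) ^ 2) := by ring
    _ ≤ 2 * L ^ 2 * s * (2 * (s * q) * (4 * (w - u) ^ 2)) := by gcongr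
    _ = 16 / π * q * (π * (L * s * (w - u)) ^ 2) := by field_simp; ring

theorem abs_rpow_sub_le_abs_sub_one_rpow_sub {x y c : ℝ} (hx : 1 ≤ x) (hxy : x ≤ y)
    (hc : 0 ≤ c) : |x ^ c - y ^ c| ≤ |(x - 1) ^ c - y ^ c| := by
  have h1 : (x - 1) ^ c ≤ x ^ c := rpow_le_rpow (by linarith) (by linarith) hc
  have h2 : x ^ c ≤ y ^ c := rpow_le_rpow (by linarith) hxy hc
  rw [abs_of_nonpos (by linarith), abs_of_nonpos (by linarith)]
  linarith

theorem stdCauchy_le_mul_volume {s : Set ℝ} {a : ℝ} (ha : 0 < a) (hs : s ⊆ {x | a ≤ |x|}) :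
    stdCauchy s ≤ ENNReal.ofReal (1 / (π * a ^ 2)) * volume s := by
  rw [stdCauchy, withDensity_apply' _ s, ← setLIntegral_const]
  refine setLIntegral_mono measurable_const fun x hx => ENNReal.ofReal_le_ofReal ?_
  have : a ^ 2 ≤ x ^ 2 := by simpa [sq_abs] using pow_le_pow_left₀ ha.le (hs hx) 2
  gcongr
  linarith

theorem volume_abs_preimage_Ico_le (a b : ℝ) :
    volume ((|·|) ⁻¹' Ico a b) ≤ ENNReal.ofReal (2 * (b - a)) := by
  have cover : (|·|) ⁻¹' Ico a b ⊆ Icc (-b) (-a) ∪ Icc a b := by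
    intro x hx
    obtain ⟨hax, hxb⟩ : a ≤ |x| ∧ |x| < b := hx
    rcases le_or_gt 0 x with hx | hx
    · rw [abs_of_nonneg hx] at hax hxb
      exact Or.inr ⟨hax, hxb.le⟩
    · rw [abs_of_neg hx] at hax hxb
      exact Or.inl ⟨by linarith, by linarith⟩
  calc volume ((|·|) ⁻¹' Ico a b) ≤ volume (Icc (-b) (-a)) + volume (Icc a b) :=
        (measure_mono cover).trans (measure_union_le _ _)
    _ = ENNReal.ofReal (2 * (b - a)) := by
      rw [Real.volume_Icc, Real.volume_Icc, ENNReal.ofReal_mul zero_le_two, ENNReal.ofReal_ofNat,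
        two_mul, neg_sub_neg]

theorem stdCauchy_abs_preimage_Ico_le {a : ℝ} (ha : 0 < a) (b : ℝ) :
    stdCauchy ((|·|) ⁻¹' Ico a b) ≤ ENNReal.ofReal (2 * (b - a) / (π * a ^ 2)) :=
  calc stdCauchy ((|·|) ⁻¹' Ico a b)
      ≤ ENNReal.ofReal (1 / (π * a ^ 2)) * volume ((|·|) ⁻¹' Ico a b) :=
        stdCauchy_le_mul_volume ha fun _ hx => hx.1
    _ ≤ ENNReal.ofReal (1 / (π * a ^ 2)) * ENNReal.ofReal (2 * (b - a)) := by
        gcongr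
        exact volume_abs_preimage_Ico_le a b
    _ = ENNReal.ofReal (2 * (b - a) / (π * a ^ 2)) := by
        rw [← ENNReal.ofReal_mul (by positivity), one_div_mul_eq_div]

theorem cauchy_annulus_bound (c : ℝ) (hc0 : 1 / 2 ≤ c) (hc1 : c ≤ 1) :
    ∃ C : ℝ, ∀ {Ω : Type} [MeasurableSpace Ω] (P : Measure Ω), IsProbabilityMeasure P →
      ∀ (X : Ω → ℝ), Measurable X → Measure.map X P = stdCauchy →
      ∀ (k₀ k : ℕ) (L : ℝ), 0 < k₀ → 0 < k → 2 ≤ |(k : ℤ) - (k₀ : ℤ)| → 1 ≤ L →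
        P {ω | L * (k₀ : ℝ) ^ (1 - c) * |((k : ℝ) - 1) ^ c - (k₀ : ℝ) ^ c| ≤ |X ω| ∧
               |X ω| < L * (k₀ : ℝ) ^ (1 - c) * |(k : ℝ) ^ c - (k₀ : ℝ) ^ c|}
          ≤ ENNReal.ofReal (C * ((k₀ : ℝ) * k) ^ (c - 1) /
              (((k : ℝ) ^ c - (k₀ : ℝ) ^ c) ^ 2 * L)) := by
  refine ⟨16 / π, fun {Ω} _ P _ X hX hmap k₀ k L hk₀ hk hdist hL => ?_⟩
  have hc : 0 < c := by linarith
  have hk₀' : (1 : ℝ) ≤ k₀ := by exact_mod_cast hk₀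
  have hs : 0 < (k₀ : ℝ) ^ (1 - c) := rpow_pos_of_pos (by linarith) _
  change P (X ⁻¹' ((|·|) ⁻¹' Ico _ _)) ≤ _
  rw [← Measure.map_apply hX (measurableSet_Ico.preimage measurable_abs), hmap]
  obtain hle | hlt : k ≤ k₀ ∨ k₀ + 2 ≤ k := by rcases le_abs'.mp hdist <;> omega
  · have hle' : (k : ℝ) ≤ k₀ := by exact_mod_cast hle
    rw [Ico_eq_empty_of_le, preimage_empty, measure_empty]
    · exact zero_le
    exact mul_le_mul_of_nonneg_left
      (abs_rpow_sub_le_abs_sub_one_rpow_sub (by exact_mod_cast hk) hle' hc.le) (by positivity)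
  · have hlt' : (k₀ : ℝ) + 2 ≤ k := by exact_mod_cast hlt
    have huw : (k₀ : ℝ) ^ c < ((k : ℝ) - 1) ^ c := rpow_lt_rpow (by linarith) (by linarith) hc
    have hwv : ((k : ℝ) - 1) ^ c ≤ (k : ℝ) ^ c := rpow_le_rpow (by linarith) (by linarith) hc.le
    have hsq : (k₀ : ℝ) ^ (1 - c) * ((k₀ : ℝ) * k) ^ (c - 1) = (k : ℝ) ^ (c - 1) := by
      rw [mul_rpow (by linarith) (by linarith), ← mul_assoc, ← rpow_add (by linarith)]
      simp
    rw [abs_of_pos (sub_pos.mpr huw), abs_of_pos (by linarith)]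
    refine (stdCauchy_abs_preimage_Ico_le (by positivity) _).trans (ENNReal.ofReal_le_ofReal ?_)
    refine two_mul_sub_div_le (by linarith) hs huw hwv
      (rpow_sub_sub_one_rpow_le_sub_one_rpow_sub (by positivity) hlt' hc.le hc1) ?_
    rw [hsq]
    exact rpow_sub_sub_one_rpow_le (by linarith) hc.le hc1
end
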